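/- arXiv:quant-ph/9812065 — 3 statements merged into one kernel-verified Lean document; each statement's English description precedes it below -/
import Mathlib

section
/- Let C be a linear code over F_2 of length n (an F_2-subspace of F_2^n) in which every nonzero codeword has Hamming weight at least d. Then for any two distinct nonzero codewords u, v ∈ C, the size of supp(u) ∪ supp(v) is at least ⌈3d/2⌉. In particular, the second generalized distance d_2 of C, defined as the minimum of |supp(u) ∪ supp(v)| over all pairs of distinct nonzero codewords u, v ∈ C, satisfies d_2 ≥ ⌈3d/2⌉. -/
/-- The support of a vector in `F_2^n`: the set of coordinates where it is nonzero. -/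
def supp {n : ℕ} (u : Fin n → ZMod 2) : Finset (Fin n) :=
  Finset.univ.filter fun i => u i ≠ 0

lemma hammingNorm_eq_supp_card {n : ℕ} (u : Fin n → ZMod 2) :
    hammingNorm u = (supp u).card := rfl

lemma supp_add {n : ℕ} (u v : Fin n → ZMod 2) :
    supp (u + v) = (supp u ∪ supp v) \ (supp u ∩ supp v) := by
  ext i
  simp only [supp, Finset.mem_sdiff, Finset.mem_union, Finset.mem_inter,
    Finset.mem_filter, Finset.mem_univ, true_and, Pi.add_apply]
  revert i
  intro i
  generalize u i = a
  generalize v i = b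
  revert a b
  decide

/-- If `C` is a binary linear code of length `n` in which every nonzero
codeword has Hamming weight at least `d`, then for any two distinct nonzero codewords
`u, v ∈ C` we have `|supp(u) ∪ supp(v)| ≥ ⌈3d/2⌉`; in particular the second generalized
distance of `C` is at least `⌈3d/2⌉`. -/
theorem second_generalized_distance_ge (n d : ℕ)
    (C : Submodule (ZMod 2) (Fin n → ZMod 2))
    (hmin : ∀ u ∈ C, u ≠ 0 → d ≤ hammingNorm u) :
    ∀ u ∈ C, ∀ v ∈ C, u ≠ 0 → v ≠ 0 → u ≠ v →
      ⌈(3 * (d : ℚ)) / 2⌉₊ ≤ (supp u ∪ supp v).card := by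
  intro u hu v hv hu0 hv0 huv
  have huv0 : u + v ≠ 0 := by
    intro h
    apply huv
    have key : ∀ a b : ZMod 2, a + b = 0 → a = b := by decide
    funext i
    exact key _ _ (congrFun h i)
  have h1 : d ≤ (supp u).card := hammingNorm_eq_supp_card u ▸ hmin u hu hu0
  have h2 : d ≤ (supp v).card := hammingNorm_eq_supp_card v ▸ hmin v hv hv0
  have h3 : d ≤ (supp (u + v)).card :=
    hammingNorm_eq_supp_card (u + v) ▸ hmin (u + v) (C.add_mem hu hv) huv0
  rw [supp_add] at h3
  have hsub : supp u ∩ supp v ⊆ supp u ∪ supp v := fun i hi =>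
    Finset.mem_union_left _ (Finset.mem_inter.mp hi).1
  have hcard : (supp u ∩ supp v).card ≤ (supp u ∪ supp v).card :=
    Finset.card_le_card hsub
  have hsum : (supp u ∪ supp v).card + (supp u ∩ supp v).card
      = (supp u).card + (supp v).card := Finset.card_union_add_card_inter _ _
  have hsdiff : ((supp u ∪ supp v) \ (supp u ∩ supp v)).card
      = (supp u ∪ supp v).card - (supp u ∩ supp v).card := Finset.card_sdiff_of_subset hsub
  rw [hsdiff] at h3
  have key : 3 * d ≤ 2 * (supp u ∪ supp v).card := by omega
  rw [Nat.ceil_le]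
  rw [div_le_iff₀ (by norm_num)]
  exact_mod_cast (by omega : 3 * d ≤ (supp u ∪ supp v).card * 2)
end

section
/- (Distance bound in Steane's construction.) Let C ⊆ C' be linear codes over F_2 of length n, let d be the minimum distance of C and d' the minimum distance of C'. Let W be an F_2-subspace of F_2^n with C ∩ W = {0} and C + W = C'. Let σ be a permutation of the n coordinates, with P denoting the induced linear map on F_2^n permuting coordinates by σ, and assume: C ∩ P(W) = {0}, C + P(W) = C', and for every nonzero c ∈ W one has c + P(c) ∉ C. Then for all a, b ∈ C and c ∈ W with (a + c, b + P(c)) ≠ (0, 0), the generalized weight |supp(a + c) ∪ supp(b + P(c))| is at least min(d, ⌈3d'/2⌉). -/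
/-- The linear map on `F_2^n` permuting coordinates by `σ`: it sends `u` to `i ↦ u (σ i)`. -/
def permMap {n : ℕ} (σ : Equiv.Perm (Fin n)) :
    (Fin n → ZMod 2) →ₗ[ZMod 2] (Fin n → ZMod 2) :=
  LinearMap.funLeft (ZMod 2) (ZMod 2) σ

lemma supp_card_eq {n : ℕ} (u : Fin n → ZMod 2) : (supp u).card = hammingNorm u := rfl

lemma zmod2_add_ne : ∀ a b : ZMod 2,
    (a + b ≠ 0 ↔ (a ≠ 0 ∨ b ≠ 0) ∧ ¬(a ≠ 0 ∧ b ≠ 0)) := by decide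

lemma two_mul_card_union {n : ℕ} (x y : Fin n → ZMod 2) :
    2 * (supp x ∪ supp y).card
      = (supp x).card + (supp y).card + (supp (x + y)).card := by
  classical
  have hsub : supp (x + y) = (supp x ∪ supp y) \ (supp x ∩ supp y) := by
    ext i
    simp only [supp, Finset.mem_filter, Finset.mem_univ, true_and, Finset.mem_sdiff,
      Finset.mem_union, Finset.mem_inter, Pi.add_apply]
    exact zmod2_add_ne (x i) (y i)
  have h2 := Finset.card_union_add_card_inter (supp x) (supp y)
  have hle := Finset.card_le_card (Finset.inter_subset_union (s := supp x) (t := supp y))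
  rw [hsub, Finset.card_sdiff_of_subset (Finset.inter_subset_union)]
  omega

/-- distance bound in Steane's construction: Let `C ⊆ C'` be binary linear
codes of length `n`, where every nonzero codeword of `C` has weight at least `d` and every
nonzero codeword of `C'` has weight at least `d'`.  Let `W` be a subspace with
`C ∩ W = 0`, `C + W = C'`, let `P` be the coordinate permutation map induced by `σ`, and
assume `C ∩ P(W) = 0`, `C + P(W) = C'`, and `c + P(c) ∉ C` for every nonzero `c ∈ W`.
Then every nonzero pair `(a + c, b + P c)` with `a, b ∈ C`, `c ∈ W` has generalized
weight `|supp(a + c) ∪ supp(b + P c)| ≥ min(d, ⌈3d'/2⌉)`. -/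
theorem steane_distance_bound (n d d' : ℕ)
    (C C' : Submodule (ZMod 2) (Fin n → ZMod 2)) (hCC' : C ≤ C')
    (hd : ∀ u ∈ C, u ≠ 0 → d ≤ hammingNorm u)
    (hd' : ∀ u ∈ C', u ≠ 0 → d' ≤ hammingNorm u)
    (W : Submodule (ZMod 2) (Fin n → ZMod 2)) (σ : Equiv.Perm (Fin n))
    (hCW : C ⊓ W = ⊥) (hCWsum : C ⊔ W = C')
    (hCPW : C ⊓ W.map (permMap σ) = ⊥) (hCPWsum : C ⊔ W.map (permMap σ) = C')
    (hfix : ∀ c ∈ W, c ≠ 0 → c + permMap σ c ∉ C) :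
    ∀ a ∈ C, ∀ b ∈ C, ∀ c ∈ W, (a + c, b + permMap σ c) ≠ (0, 0) →
      min d ⌈(3 * (d' : ℚ)) / 2⌉₊ ≤ (supp (a + c) ∪ supp (b + permMap σ c)).card := by
  intro a ha b hb c hc hne
  have hW_le : W ≤ C' := hCWsum ▸ le_sup_right
  have hPW_le : W.map (permMap σ) ≤ C' := hCPWsum ▸ le_sup_right
  have hPc : permMap σ c ∈ W.map (permMap σ) := Submodule.mem_map_of_mem hc
  by_cases hc0 : c = 0
  · subst hc0
    simp only [map_zero, add_zero] at hne ⊢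
    have : a ≠ 0 ∨ b ≠ 0 := by
      by_contra h
      push_neg at h
      exact hne (by simp [h.1, h.2])
    rcases this with h | h
    · calc min d ⌈(3 * (d' : ℚ)) / 2⌉₊ ≤ d := min_le_left _ _
        _ ≤ hammingNorm a := hd a ha h
        _ = (supp a).card := (supp_card_eq a).symm
        _ ≤ (supp a ∪ supp b).card := Finset.card_le_card Finset.subset_union_left
    · calc min d ⌈(3 * (d' : ℚ)) / 2⌉₊ ≤ d := min_le_left _ _
        _ ≤ hammingNorm b := hd b hb h
        _ = (supp b).card := (supp_card_eq b).symm
        _ ≤ (supp a ∪ supp b).card := Finset.card_le_card Finset.subset_union_right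
  · set x := a + c with hxdef
    set y := b + permMap σ c with hydef
    have hxC' : x ∈ C' := C'.add_mem (hCC' ha) (hW_le hc)
    have hyC' : y ∈ C' := C'.add_mem (hCC' hb) (hPW_le hPc)
    have hx0 : x ≠ 0 := by
      intro h
      have hcC : c ∈ C := by
        have : c = -a := eq_neg_of_add_eq_zero_right h
        rw [this]; exact C.neg_mem ha
      have : c ∈ C ⊓ W := ⟨hcC, hc⟩
      rw [hCW] at this
      exact hc0 (by simpa using this)
    have hy0 : y ≠ 0 := by
      intro h
      have hPcC : permMap σ c ∈ C := by
        have : permMap σ c = -b := eq_neg_of_add_eq_zero_right h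
        rw [this]; exact C.neg_mem hb
      have : permMap σ c ∈ C ⊓ W.map (permMap σ) := ⟨hPcC, hPc⟩
      rw [hCPW] at this
      have hPc0 : permMap σ c = 0 := by simpa using this
      apply hc0
      funext i
      have := congrFun hPc0 (σ⁻¹ i)
      simpa [permMap, LinearMap.funLeft] using this
    have hxy_notC : x + y ∉ C := by
      intro h
      apply hfix c hc hc0
      have heq : c + permMap σ c = (x + y) - (a + b) := by
        rw [hxdef, hydef]; ring
      rw [heq]
      exact C.sub_mem h (C.add_mem ha hb)
    have hxy0 : x + y ≠ 0 := fun h => hxy_notC (h ▸ C.zero_mem)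
    have hxyC' : x + y ∈ C' := C'.add_mem hxC' hyC'
    have hwx := hd' x hxC' hx0
    have hwy := hd' y hyC' hy0
    have hwxy := hd' (x + y) hxyC' hxy0
    have key := two_mul_card_union x y
    rw [supp_card_eq, supp_card_eq, supp_card_eq] at key
    have h3 : 3 * d' ≤ 2 * (supp x ∪ supp y).card := by omega
    have : ⌈(3 * (d' : ℚ)) / 2⌉₊ ≤ (supp x ∪ supp y).card := by
      rw [Nat.ceil_le, div_le_iff₀ (by norm_num : (0:ℚ) < 2)]
      have : (3:ℚ) * d' ≤ 2 * (supp x ∪ supp y).card := by exact_mod_cast h3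
      linarith
    exact le_trans (min_le_right _ _) this
end

section
/- Fix a vector w ∈ F_2^n of Hamming weight t ≥ 1. The number of unordered pairs {u, v} of distinct nonzero vectors of F_2^n, each of even Hamming weight, whose bitwise OR equals w (i.e., supp(u) ∪ supp(v) = supp(w)), is at most (3^t + 1)/8. -/
open Finset

section ZeroSum

variable (ι G : Type*) [Fintype ι] [DecidableEq ι] [AddCommGroup G] [Fintype G] [DecidableEq G]

def nowhereZeroZeroSum : Finset (ι → G) :=
  {f ∈ Fintype.piFinset fun _ => ({0}ᶜ : Finset G) | ∑ i, f i = 0}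

variable {ι G}

lemma mem_nowhereZeroZeroSum {f : ι → G} :
    f ∈ nowhereZeroZeroSum ι G ↔ (∀ i, f i ≠ 0) ∧ ∑ i, f i = 0 := by
  simp [nowhereZeroZeroSum]

variable (G)

lemma card_nowhereZeroZeroSum_succ_add (k : ℕ) :
    #(nowhereZeroZeroSum (Fin (k + 1)) G) + #(nowhereZeroZeroSum (Fin k) G)
      = (Fintype.card G - 1) ^ k := by
  have hsucc : #(nowhereZeroZeroSum (Fin (k + 1)) G)
      = #{g ∈ Fintype.piFinset fun _ : Fin k => ({0}ᶜ : Finset G) | ∑ i, g i ≠ 0} := by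
    refine card_nbij' Fin.tail (fun g => Fin.cons (-∑ i, g i) g) ?_ ?_ ?_ ?_
    · intro f hf
      obtain ⟨hne, hsum⟩ := mem_nowhereZeroZeroSum.1 hf
      rw [Fin.sum_univ_succ, add_eq_zero_iff_neg_eq'] at hsum
      refine mem_filter.2 ⟨by simp [Fin.tail, hne], fun h => hne 0 ?_⟩
      rw [← hsum]
      simpa [Fin.tail] using h
    · intro g hg
      simp only [coe_filter, Fintype.mem_piFinset, mem_compl, mem_singleton] at hg
      simp [mem_nowhereZeroZeroSum, Fin.forall_fin_succ, hg.1, hg.2]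
    · intro f hf
      have hsum := (mem_nowhereZeroZeroSum.1 hf).2
      rw [Fin.sum_univ_succ, add_eq_zero_iff_neg_eq'] at hsum
      simp [Fin.tail, hsum]
    · intro g _
      simp
  rw [hsucc, nowhereZeroZeroSum, add_comm, card_filter_add_card_filter_not]
  simp [card_compl]

lemma card_nowhereZeroZeroSum_fin (k : ℕ) :
    (Fintype.card G : ℤ) * #(nowhereZeroZeroSum (Fin k) G)
      = (Fintype.card G - 1) ^ k + (Fintype.card G - 1) * (-1) ^ k := by
  induction k with
  | zero =>
    have h : #(nowhereZeroZeroSum (Fin 0) G) = 1 :=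
      card_eq_one.2 ⟨0, eq_singleton_iff_unique_mem.2
        ⟨by simp [mem_nowhereZeroZeroSum], fun f _ => Subsingleton.elim f 0⟩⟩
    simp [h]
  | succ k ih =>
    have h : ((#(nowhereZeroZeroSum (Fin (k + 1)) G) : ℕ) : ℤ)
        = (Fintype.card G - 1 : ℤ) ^ k - #(nowhereZeroZeroSum (Fin k) G) := by
      have hG : 1 ≤ Fintype.card G := Fintype.card_pos
      have := congrArg (Nat.cast : ℕ → ℤ) (card_nowhereZeroZeroSum_succ_add G k)
      push_cast [Nat.cast_sub hG] at this
      linarith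
    rw [h, mul_sub, ih]
    ring

variable (ι) in
lemma card_nowhereZeroZeroSum :
    (Fintype.card G : ℤ) * #(nowhereZeroZeroSum ι G)
      = (Fintype.card G - 1) ^ Fintype.card ι + (Fintype.card G - 1) * (-1) ^ Fintype.card ι := by
  rw [← card_nowhereZeroZeroSum_fin]
  congr 2
  refine card_equiv ((Fintype.equivFin ι).arrowCongr (Equiv.refl G)) fun f => ?_
  simp only [mem_nowhereZeroZeroSum, Equiv.arrowCongr_apply, Equiv.coe_refl,
    Function.comp_apply, id_eq, Equiv.sum_comp]
  rw [(Fintype.equivFin ι).forall_congr_left]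

end ZeroSum

variable (ι) in
lemma four_mul_card_nowhereZeroZeroSum_erase_add_one_le [Fintype ι] [DecidableEq ι] :
    4 * #((nowhereZeroZeroSum ι (ZMod 2 × ZMod 2)).erase fun _ => (1, 1)) + 1
      ≤ 3 ^ Fintype.card ι := by
  have hcard := card_nowhereZeroZeroSum ι (ZMod 2 × ZMod 2)
  simp only [Fintype.card_prod, ZMod.card] at hcard
  rcases Nat.even_or_odd (Fintype.card ι) with heven | hodd
  · have hmem : (fun _ => (1, 1)) ∈ nowhereZeroZeroSum ι (ZMod 2 × ZMod 2) := by
      obtain ⟨m, hm⟩ := heven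
      simpa [mem_nowhereZeroZeroSum, hm] using CharTwo.add_self_eq_zero (m : ZMod 2)
    rw [heven.neg_one_pow] at hcard
    have hpos : 0 < #(nowhereZeroZeroSum ι (ZMod 2 × ZMod 2)) := card_pos.2 ⟨_, hmem⟩
    have herase := card_erase_of_mem hmem
    zify [hpos] at herase ⊢
    norm_num at hcard
    linarith
  · rw [hodd.neg_one_pow] at hcard
    have herase : #((nowhereZeroZeroSum ι (ZMod 2 × ZMod 2)).erase fun _ => (1, 1))
        ≤ #(nowhereZeroZeroSum ι (ZMod 2 × ZMod 2)) := card_erase_le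
    zify at herase ⊢
    norm_num at hcard
    linarith

lemma sum_eq_hammingNorm {ι : Type*} [Fintype ι] (u : ι → ZMod 2) :
    ∑ i, u i = hammingNorm u := by
  have hval : ∀ x : ZMod 2, x = if x ≠ 0 then 1 else 0 := by decide
  rw [hammingNorm, natCast_card_filter]
  exact sum_congr rfl fun i _ => hval (u i)

lemma even_hammingNorm_iff_sum_eq_zero {ι : Type*} [Fintype ι] (u : ι → ZMod 2) :
    Even (hammingNorm u) ↔ ∑ i, u i = 0 := by
  rw [sum_eq_hammingNorm, ZMod.natCast_eq_zero_iff_even]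

section EvenPairs

variable {n : ℕ}

lemma mem_supp {u : Fin n → ZMod 2} {i : Fin n} : i ∈ supp u ↔ u i ≠ 0 := by
  simp [supp]

lemma notMem_supp {u : Fin n → ZMod 2} {i : Fin n} : i ∉ supp u ↔ u i = 0 := by
  simp [supp]

lemma sum_supp_eq_zero {S : Finset (Fin n)} {u : Fin n → ZMod 2} (hS : supp u ⊆ S)
    (hu : Even (hammingNorm u)) : ∑ i : S, u i = 0 := by
  rw [sum_coe_sort, sum_subset (subset_univ S) fun i _ hi => ?_]
  · exact (even_hammingNorm_iff_sum_eq_zero u).1 hu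
  · exact notMem_supp.1 fun h => hi (hS h)

lemma eq_of_supp_subset_of_eqOn {S : Finset (Fin n)} {u v : Fin n → ZMod 2} (hu : supp u ⊆ S)
    (hv : supp v ⊆ S) (h : ∀ i ∈ S, u i = v i) : u = v := by
  funext i
  by_cases hi : i ∈ S
  · exact h i hi
  · rw [notMem_supp.1 fun h => hi (hu h), notMem_supp.1 fun h => hi (hv h)]

def zipOn (S : Finset (Fin n)) (u v : Fin n → ZMod 2) (i : S) : ZMod 2 × ZMod 2 :=
  (u i, v i)

lemma zipOn_mem_erase {S : Finset (Fin n)} {u v : Fin n → ZMod 2} (huv : u ≠ v)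
    (hu : Even (hammingNorm u)) (hv : Even (hammingNorm v)) (hS : supp u ∪ supp v = S) :
    zipOn S u v ∈ (nowhereZeroZeroSum S (ZMod 2 × ZMod 2)).erase fun _ => (1, 1) := by
  have hSu : supp u ⊆ S := hS ▸ subset_union_left
  have hSv : supp v ⊆ S := hS ▸ subset_union_right
  refine mem_erase.2 ⟨fun hone => huv (eq_of_supp_subset_of_eqOn hSu hSv fun i hi => ?_),
    mem_nowhereZeroZeroSum.2 ⟨?_, ?_⟩⟩
  · obtain ⟨hui, hvi⟩ := Prod.ext_iff.1 (congrFun hone ⟨i, hi⟩)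
    exact hui.trans hvi.symm
  · rintro ⟨i, hi⟩ h0
    rw [← hS, mem_union, mem_supp, mem_supp] at hi
    obtain ⟨hui, hvi⟩ := Prod.ext_iff.1 h0
    exact hi.elim (· hui) (· hvi)
  · change ∑ i : S, (u i, v i) = 0
    rw [← prod_mk_sum, sum_supp_eq_zero hSu hu, sum_supp_eq_zero hSv hv, Prod.mk_zero_zero]

lemma zipOn_injOn (S : Finset (Fin n)) :
    Set.InjOn (fun p : (Fin n → ZMod 2) × (Fin n → ZMod 2) => zipOn S p.1 p.2)
      {p | supp p.1 ∪ supp p.2 = S} := by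
  rintro ⟨u, v⟩ (huv : _ = S) ⟨u', v'⟩ (huv' : _ = S) h
  have hcoord (i : Fin n) (hi : i ∈ S) := Prod.ext_iff.1 (congrFun h ⟨i, hi⟩)
  exact Prod.ext
    (eq_of_supp_subset_of_eqOn (huv ▸ subset_union_left) (huv' ▸ subset_union_left)
      fun i hi => (hcoord i hi).1)
    (eq_of_supp_subset_of_eqOn (huv ▸ subset_union_right) (huv' ▸ subset_union_right)
      fun i hi => (hcoord i hi).2)

def evenCoverGraph (w : Fin n → ZMod 2) : SimpleGraph (Fin n → ZMod 2) where
  Adj u v := u ≠ v ∧ Even (hammingNorm u) ∧ Even (hammingNorm v) ∧ supp u ∪ supp v = supp w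
  symm := ⟨fun _ _ ⟨huv, hu, hv, hS⟩ => ⟨huv.symm, hv, hu, union_comm (supp _) _ ▸ hS⟩⟩
  loopless := ⟨fun _ h => h.1 rfl⟩

lemma evenCoverGraph_adj {w u v : Fin n → ZMod 2} : (evenCoverGraph w).Adj u v ↔
    u ≠ v ∧ Even (hammingNorm u) ∧ Even (hammingNorm v) ∧ supp u ∪ supp v = supp w :=
  Iff.rfl

instance (w : Fin n → ZMod 2) : DecidableRel (evenCoverGraph w).Adj :=
  fun _ _ => decidable_of_iff' _ evenCoverGraph_adj

lemma four_mul_card_dart_evenCoverGraph_add_one_le (w : Fin n → ZMod 2) :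
    4 * Fintype.card (evenCoverGraph w).Dart + 1 ≤ 3 ^ hammingNorm w := by
  have hdarts : Fintype.card (evenCoverGraph w).Dart
      ≤ #((nowhereZeroZeroSum (supp w) (ZMod 2 × ZMod 2)).erase fun _ => (1, 1)) := by
    rw [← card_univ]
    refine card_le_card_of_injOn (fun d => zipOn (supp w) d.fst d.snd) (fun d _ => ?_) ?_
    · obtain ⟨huv, hu, hv, hS⟩ := evenCoverGraph_adj.1 d.adj
      exact zipOn_mem_erase huv hu hv hS
    · intro d _ d' _ h
      exact SimpleGraph.Dart.ext _ _ (zipOn_injOn (supp w) (evenCoverGraph_adj.1 d.adj).2.2.2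
        (evenCoverGraph_adj.1 d'.adj).2.2.2 h)
  have := four_mul_card_nowhereZeroZeroSum_erase_add_one_le (supp w)
  rw [Fintype.card_coe] at this
  exact le_trans (by omega) this

end EvenPairs

theorem count_pairs_with_given_or_general (n t : ℕ) (w : Fin n → ZMod 2)
    (hw : hammingNorm w = t) :
    8 * Set.ncard {p : Sym2 (Fin n → ZMod 2) |
        ∃ u v : Fin n → ZMod 2, p = s(u, v) ∧ u ≠ v ∧ u ≠ 0 ∧ v ≠ 0 ∧
          Even (hammingNorm u) ∧ Even (hammingNorm v) ∧
          supp u ∪ supp v = supp w} ≤ 3 ^ t + 1 := by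
  calc _ ≤ 8 * (evenCoverGraph w).edgeSet.ncard := by
        refine Nat.mul_le_mul_left 8 (Set.ncard_le_ncard ?_)
        rintro _ ⟨u, v, rfl, huv, -, -, hu, hv, hS⟩
        exact evenCoverGraph_adj.2 ⟨huv, hu, hv, hS⟩
    _ = 4 * Fintype.card (evenCoverGraph w).Dart := by
        rw [← SimpleGraph.coe_edgeFinset, Set.ncard_coe_finset,
          SimpleGraph.dart_card_eq_twice_card_edges]
        ring
    _ ≤ 3 ^ t + 1 := by
        have := four_mul_card_dart_evenCoverGraph_add_one_le w
        rw [hw] at this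
        omega

/-- Fix a vector `w ∈ F_2^n` of Hamming weight `t ≥ 1`.  The number of
unordered pairs `{u, v}` of distinct nonzero vectors, each of even Hamming weight, whose
bitwise OR equals `w` (i.e. `supp(u) ∪ supp(v) = supp(w)`) is at most `(3^t + 1)/8`,
stated as: 8 times the number of such pairs is at most `3^t + 1`. -/
theorem count_pairs_with_given_or (n t : ℕ) (w : Fin n → ZMod 2)
    (hw : hammingNorm w = t) (ht : 1 ≤ t) :
    8 * Set.ncard {p : Sym2 (Fin n → ZMod 2) |
        ∃ u v : Fin n → ZMod 2, p = s(u, v) ∧ u ≠ v ∧ u ≠ 0 ∧ v ≠ 0 ∧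
          Even (hammingNorm u) ∧ Even (hammingNorm v) ∧
          supp u ∪ supp v = supp w} ≤ 3 ^ t + 1 :=
  count_pairs_with_given_or_general n t w hw
end
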